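/- arXiv:2002.04906 — 3 statements merged into one kernel-verified Lean document; each statement's English description precedes it below -/
import Mathlib

section
/- Every interval matrix is totally unimodular: each of its square submatrices has determinant in {-1, 0, 1}. -/
/-- A 0-1 matrix in which, in each column, the ones appear consecutively. -/
def IsIntervalMatrix {m n : ℕ} (A : Matrix (Fin m) (Fin n) ℤ) : Prop :=
  (∀ i j, A i j = 0 ∨ A i j = 1) ∧
  ∀ j (i k l : Fin m), i ≤ l → l ≤ k → A i j = 1 → A k j = 1 → A l j = 1

lemma interval_sub {m n p q : ℕ} {A : Matrix (Fin m) (Fin n) ℤ} (hA : IsIntervalMatrix A)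
    (r : Fin p → Fin m) (c : Fin q → Fin n) (hr : Monotone r) :
    IsIntervalMatrix (A.submatrix r c) := by
  refine ⟨fun i j => hA.1 _ _, fun j i k l hil hlk h1 h2 => ?_⟩
  exact hA.2 (c j) (r i) (r k) (r l) (hr hil) (hr hlk) h1 h2

lemma mem_neg_one_pow_mul {x : ℤ} (t : ℕ) (hx : x ∈ ({-1, 0, 1} : Set ℤ)) :
    (-1 : ℤ) ^ t * x ∈ ({-1, 0, 1} : Set ℤ) := by
  rcases Nat.even_or_odd t with h | h
  · rw [h.neg_one_pow, one_mul]; exact hx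
  · rw [h.neg_one_pow, neg_one_mul]
    simp only [Set.mem_insert_iff, Set.mem_singleton_iff] at hx ⊢
    rcases hx with h | h | h <;> simp [h]

lemma interval_det : ∀ (k : ℕ) (B : Matrix (Fin k) (Fin k) ℤ), IsIntervalMatrix B →
    B.det ∈ ({-1, 0, 1} : Set ℤ) := by
  intro k
  induction k with
  | zero => intro B _; simp [Matrix.det_fin_zero]
  | succ k ih =>
    intro B hB
    by_cases h0 : ∃ j, B 0 j = 1
    · -- set of columns with a 1 in row 0
      classical
      set T : Fin (k+1) → Finset (Fin (k+1)) :=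
        fun j => Finset.univ.filter (fun i => B i j = 1) with hT
      set e : Fin (k+1) → Fin (k+1) :=
        fun j => if h : (T j).Nonempty then (T j).max' h else 0 with he
      have hmem : ∀ j, B 0 j = 1 → B (e j) j = 1 := by
        intro j hj
        have hne : (T j).Nonempty := ⟨0, by simp [hT, hj]⟩
        have := Finset.max'_mem (T j) hne
        simp only [he, dif_pos hne]
        simpa [hT] using this
      have hle : ∀ j i, B 0 j = 1 → B i j = 1 → i ≤ e j := by
        intro j i hj hi
        have hne : (T j).Nonempty := ⟨0, by simp [hT, hj]⟩
        simp only [he, dif_pos hne]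
        exact Finset.le_max' _ _ (by simp [hT, hi])
      have hiff : ∀ j i, B 0 j = 1 → (B i j = 1 ↔ i ≤ e j) := by
        intro j i hj
        refine ⟨hle j i hj, fun h => hB.2 j 0 (e j) i (Fin.zero_le i) h hj (hmem j hj)⟩
      -- pick j* with minimal e
      obtain ⟨j0, hj0⟩ := h0
      have hS : (Finset.univ.filter (fun j => B 0 j = 1)).Nonempty := ⟨j0, by simp [hj0]⟩
      obtain ⟨js, hjs, hmin⟩ := Finset.exists_min_image _ e hS
      have hjs1 : B 0 js = 1 := by simpa using hjs
      have hmin' : ∀ j, B 0 j = 1 → e js ≤ e j := fun j hj => hmin j (by simp [hj])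
      -- dominance: column js ≤ column j for any column j with B 0 j = 1
      have hdom : ∀ j i, B 0 j = 1 → B i js = 1 → B i j = 1 := by
        intro j i hj hi
        exact (hiff j i hj).2 (le_trans ((hiff js i hjs1).1 hi) (hmin' j hj))
      -- column operation
      set c : Fin (k+1) → ℤ := fun j => if j ≠ js ∧ B 0 j = 1 then -1 else 0 with hc
      set C : Matrix (Fin (k+1)) (Fin (k+1)) ℤ :=
        fun i j => B i j + c j * B i js with hC
      have hdet : C.det = B.det := by
        rw [← Matrix.det_transpose C, ← Matrix.det_transpose B]
        exact Matrix.det_eq_of_forall_row_eq_smul_add_const c js (by simp [hc])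
          (fun j i => rfl)
      -- C entries description
      have hCeq : ∀ i j, C i j = if j ≠ js ∧ B 0 j = 1 then B i j - B i js else B i j := by
        intro i j
        simp only [hC, hc]
        split_ifs with h <;> ring
      have hsub1 : ∀ i j, j ≠ js → B 0 j = 1 → B i js = 1 → C i j = 0 := by
        intro i j hne hj hi
        rw [hCeq, if_pos ⟨hne, hj⟩, hdom j i hj hi, hi, sub_self]
      -- C is 0/1
      have hC01 : ∀ i j, C i j = 0 ∨ C i j = 1 := by
        intro i j
        rw [hCeq]
        split_ifs with h
        · rcases hB.1 i js with hs | hs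
          · rw [hs, sub_zero]; exact hB.1 i j
          · left; rw [hdom j i h.2 hs, hs, sub_self]
        · exact hB.1 i j
      -- C is interval
      have hCint : IsIntervalMatrix C := by
        refine ⟨hC01, fun j i kk l hil hlk h1 h2 => ?_⟩
        by_cases h : j ≠ js ∧ B 0 j = 1
        · rw [hCeq, if_pos h] at h1 h2 ⊢
          have hBijs : B i js = 0 := by
            rcases hB.1 i js with hs | hs
            · exact hs
            · exfalso; rw [hdom j i h.2 hs, hs, sub_self] at h1; exact one_ne_zero h1.symm
          have hBi : B i j = 1 := by
            rcases hB.1 i j with hs | hs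
            · rw [hs, hBijs, sub_zero] at h1; exact absurd h1.symm one_ne_zero
            · exact hs
          have hBkjs : B kk js = 0 := by
            rcases hB.1 kk js with hs | hs
            · exact hs
            · exfalso; rw [hdom j kk h.2 hs, hs, sub_self] at h2; exact one_ne_zero h2.symm
          have hBk : B kk j = 1 := by
            rcases hB.1 kk j with hs | hs
            · rw [hs, hBkjs, sub_zero] at h2; exact absurd h2.symm one_ne_zero
            · exact hs
          have hBl : B l j = 1 := hB.2 j i kk l hil hlk hBi hBk
          have hBljs : B l js = 0 := by
            rcases hB.1 l js with hs | hs
            · exact hs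
            · exfalso
              have : B i js = 1 := hB.2 js 0 l i (Fin.zero_le i) hil hjs1 hs
              rw [this] at hBijs; exact one_ne_zero hBijs
          rw [hBl, hBljs, sub_zero]
        · rw [hCeq, if_neg h] at h1 h2 ⊢
          exact hB.2 j i kk l hil hlk h1 h2
      -- row 0 of C
      have hrow0 : ∀ j, j ≠ js → C 0 j = 0 := by
        intro j hne
        by_cases hj : B 0 j = 1
        · exact hsub1 0 j hne hj hjs1
        · rw [hCeq, if_neg (by tauto)]
          rcases hB.1 0 j with hs | hs
          · exact hs
          · exact absurd hs hj
      have hrowjs : C 0 js = 1 := by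
        rw [hCeq, if_neg (by tauto)]; exact hjs1
      -- Laplace expansion
      rw [← hdet, Matrix.det_succ_row_zero]
      rw [Fintype.sum_eq_single js (fun j hj => by rw [hrow0 j hj]; ring)]
      rw [hrowjs, mul_one]
      have hminor : IsIntervalMatrix (C.submatrix Fin.succ js.succAbove) :=
        interval_sub hCint _ _ (Fin.strictMono_succ.monotone)
      exact mem_neg_one_pow_mul _ (ih _ hminor)
    · -- row 0 is zero
      push_neg at h0
      have : B.det = 0 := Matrix.det_eq_zero_of_row_eq_zero 0
        (fun j => (hB.1 0 j).resolve_right (h0 j))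
      simp [this]

theorem stmt_7 {m n : ℕ} (A : Matrix (Fin m) (Fin n) ℤ)
    (hA : IsIntervalMatrix A) :
    ∀ (k : ℕ) (r : Fin k → Fin m) (c : Fin k → Fin n),
      StrictMono r → StrictMono c →
      (A.submatrix r c).det ∈ ({-1, 0, 1} : Set ℤ) := by
  intro k r c hr _
  exact interval_det k _ (interval_sub hA r c hr.monotone)
end

section
/- In the one-dimensional cover problem, if S is a minimum-cost subcollection of intervals covering {0,...,N-1}, with all costs positive, and C = [n0, N) is an interval in S containing the cell N-1 with minimal left endpoint n0 among members of S containing N-1, then S \ {C} restricted to covering {0,...,n0-1} is a minimum-cost subcollection covering {0,...,n0-1} among subcollections of the available intervals whose members are subsets of {0,...,N-1}. -/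
/-- `Covers S U` : every cell of `U` lies in some interval `[p.1, p.2)` of `S`. -/
def Covers (S : Finset (ℕ × ℕ)) (U : Finset ℕ) : Prop :=
  ∀ k ∈ U, ∃ p ∈ S, p.1 ≤ k ∧ k < p.2

theorem stmt_18 (N : ℕ) (hN : 0 < N)
    (𝒞 : Finset (ℕ × ℕ)) (h𝒞 : ∀ p ∈ 𝒞, p.1 < p.2 ∧ p.2 ≤ N)
    (T : ℕ × ℕ → ℝ) (hT : ∀ p ∈ 𝒞, 0 < T p)
    (S : Finset (ℕ × ℕ)) (hS𝒞 : S ⊆ 𝒞)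
    (hScov : Covers S (Finset.range N))
    (hSopt : ∀ S' ⊆ 𝒞, Covers S' (Finset.range N) → ∑ p ∈ S, T p ≤ ∑ p ∈ S', T p)
    (n0 : ℕ) (hC : (n0, N) ∈ S) (hn0 : n0 ≤ N - 1)
    (hmin : ∀ p ∈ S, p.1 ≤ N - 1 → N - 1 < p.2 → n0 ≤ p.1) :
    Covers (S.erase (n0, N)) (Finset.range n0) ∧
    ∀ S' ⊆ 𝒞, Covers S' (Finset.range n0) →
      ∑ p ∈ S.erase (n0, N), T p ≤ ∑ p ∈ S', T p := by
  constructor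
  · intro k hk
    rw [Finset.mem_range] at hk
    obtain ⟨p, hpS, hp1, hp2⟩ := hScov k (Finset.mem_range.mpr (lt_of_lt_of_le hk (le_trans hn0 (Nat.sub_le N 1))))
    refine ⟨p, Finset.mem_erase.mpr ⟨?_, hpS⟩, hp1, hp2⟩
    intro h
    rw [h] at hp1
    exact absurd hp1 (not_le.mpr hk)
  · intro S' hS' hcov
    have hC𝒞 : (n0, N) ∈ 𝒞 := hS𝒞 hC
    set S'' := insert (n0, N) S' with hS''
    have hsub : S'' ⊆ 𝒞 := Finset.insert_subset hC𝒞 hS'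
    have hcov'' : Covers S'' (Finset.range N) := by
      intro k hk
      rw [Finset.mem_range] at hk
      by_cases h : k < n0
      · obtain ⟨p, hpS, h1, h2⟩ := hcov k (Finset.mem_range.mpr h)
        exact ⟨p, Finset.mem_insert_of_mem hpS, h1, h2⟩
      · exact ⟨(n0, N), Finset.mem_insert_self _ _, not_lt.mp h, hk⟩
    have h1 : ∑ p ∈ S, T p ≤ ∑ p ∈ S'', T p := hSopt S'' hsub hcov''
    have h2 : ∑ p ∈ S'', T p ≤ T (n0, N) + ∑ p ∈ S', T p := by
      by_cases h : (n0, N) ∈ S'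
      · rw [hS'', Finset.insert_eq_self.mpr h]
        linarith [hT _ hC𝒞]
      · rw [hS'', Finset.sum_insert h]
    have h3 : ∑ p ∈ S.erase (n0, N), T p = ∑ p ∈ S, T p - T (n0, N) :=
      Finset.sum_erase_eq_sub hC
    linarith
end

section
/- Let A be a 0-1 interval matrix (ones consecutive in each column) with no zero row, and T a positive rational cost vector. Then the linear program min Tᵀx over {x ≥ 0 : A·x ≥ 1} attains its optimum at an integer point; that is, there exists x* ∈ ℤ^n, x* ≥ 0, with A·x* ≥ 1 and Tᵀx* ≤ Tᵀx for all feasible x. -/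
set_option maxHeartbeats 1600000 in
theorem stmt_19 {m n : ℕ} (A : Matrix (Fin m) (Fin n) ℚ)
    (hA01 : ∀ i j, A i j = 0 ∨ A i j = 1)
    (hint : ∀ j (i k l : Fin m), i ≤ l → l ≤ k → A i j = 1 → A k j = 1 → A l j = 1)
    (hrow : ∀ i, ∃ j, A i j = 1)
    (T : Fin n → ℚ) (hT : ∀ j, 0 < T j) :
    ∃ x : Fin n → ℤ, (∀ j, 0 ≤ x j) ∧
      (∀ i, 1 ≤ A.mulVec (fun j => (x j : ℚ)) i) ∧
      ∀ y : Fin n → ℚ, (∀ j, 0 ≤ y j) → (∀ i, 1 ≤ A.mulVec y i) →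
        ∑ j, T j * (x j : ℚ) ≤ ∑ j, T j * y j := by
  classical
  set cost : Finset (Fin n) → ℚ := fun S => ∑ j ∈ S, T j with hcostdef
  set cand : ℕ → Finset (Finset (Fin n)) :=
    fun k => Finset.univ.filter (fun S => ∀ i : Fin m, (i : ℕ) < k → ∃ j ∈ S, A i j = 1)
    with hcanddef
  have hcand_mem : ∀ k (S : Finset (Fin n)),
      S ∈ cand k ↔ ∀ i : Fin m, (i : ℕ) < k → ∃ j ∈ S, A i j = 1 := by
    intro k S
    rw [hcanddef]
    exact Finset.mem_filter.trans (by simp)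
  have hne : ∀ k, (cand k).Nonempty := by
    intro k
    refine ⟨Finset.univ, (hcand_mem k _).mpr ?_⟩
    intro i _
    obtain ⟨j, hj⟩ := hrow i
    exact ⟨j, Finset.mem_univ j, hj⟩
  set d : ℕ → ℚ := fun k => (cand k).inf' (hne k) cost with hddef
  have hd_le : ∀ k S, S ∈ cand k → d k ≤ cost S := fun k S hS => Finset.inf'_le _ hS
  have hd_mem : ∀ k, ∃ S ∈ cand k, d k = cost S := by
    intro k
    obtain ⟨S, hS, h⟩ := Finset.exists_mem_eq_inf' (hne k) cost
    exact ⟨S, hS, h⟩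
  have hcost_nonneg : ∀ S, 0 ≤ cost S := fun S => Finset.sum_nonneg fun j _ => (hT j).le
  have hmono : ∀ k k', k ≤ k' → d k ≤ d k' := by
    intro k k' hkk'
    obtain ⟨S, hS, hSeq⟩ := hd_mem k'
    rw [hSeq]
    refine hd_le k S ?_
    rw [hcand_mem] at hS ⊢
    exact fun i hi => hS i (lt_of_lt_of_le hi hkk')
  have hd0 : d 0 = 0 := by
    have h1 : d 0 ≤ 0 := by
      have hmem : (∅ : Finset (Fin n)) ∈ cand 0 := by
        rw [hcand_mem]
        intro i hi
        omega
      simpa [hcostdef] using hd_le 0 ∅ hmem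
    obtain ⟨S, _, hSeq⟩ := hd_mem 0
    have h2 : 0 ≤ d 0 := hSeq ▸ hcost_nonneg S
    linarith
  -- key step: interval column gives potential inequality
  have hkey : ∀ (j : Fin n) (l r : Fin m), A l j = 1 → A r j = 1 →
      d (r.val + 1) ≤ d l.val + T j := by
    intro j l r hl hr
    obtain ⟨S, hS, hSeq⟩ := hd_mem l.val
    have hmem : insert j S ∈ cand (r.val + 1) := by
      rw [hcand_mem] at hS ⊢
      intro i hi
      by_cases hil : (i : ℕ) < l.val
      · obtain ⟨j', hj'S, hj'⟩ := hS i hil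
        exact ⟨j', Finset.mem_insert_of_mem hj'S, hj'⟩
      · push_neg at hil
        have hli : l ≤ i := hil
        have hir : i ≤ r := by
          have : (i : ℕ) ≤ r.val := by omega
          exact this
        exact ⟨j, Finset.mem_insert_self j S, hint j l r i hli hir hl hr⟩
    have h1 := hd_le _ _ hmem
    have h2 : cost (insert j S) ≤ T j + cost S := by
      by_cases hjS : j ∈ S
      · rw [Finset.insert_eq_self.2 hjS]
        linarith [hT j]
      · simp only [hcostdef]
        rw [Finset.sum_insert hjS]
    rw [hSeq]
    linarith
  -- inequality per column
  have hcol : ∀ j : Fin n, ∑ i : Fin m, (d (i.val + 1) - d i.val) * A i j ≤ T j := by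
    intro j
    set F : Finset (Fin m) := Finset.univ.filter (fun i => A i j = 1) with hFdef
    have hsum : ∑ i : Fin m, (d (i.val + 1) - d i.val) * A i j
        = ∑ i ∈ F, (d (i.val + 1) - d i.val) := by
      rw [hFdef, Finset.sum_filter]
      apply Finset.sum_congr rfl
      intro i _
      rcases hA01 i j with h | h <;> simp [h]
    rw [hsum]
    by_cases hF : F.Nonempty
    · set l := F.min' hF with hldef
      set r := F.max' hF with hrdef
      have hl : A l j = 1 := (Finset.mem_filter.mp (F.min'_mem hF)).2
      have hr : A r j = 1 := (Finset.mem_filter.mp (F.max'_mem hF)).2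
      have hlr : l.val ≤ r.val := F.min'_le r (F.max'_mem hF)
      have hFimg : F.image Fin.val = Finset.Ico l.val (r.val + 1) := by
        ext k
        simp only [Finset.mem_image, Finset.mem_Ico]
        constructor
        · rintro ⟨i, hiF, rfl⟩
          have h1 : l ≤ i := F.min'_le i hiF
          have h2 : i ≤ r := F.le_max' i hiF
          exact ⟨h1, by omega⟩
        · rintro ⟨h1, h2⟩
          have hkm : k < m := lt_of_le_of_lt (by omega : k ≤ r.val) r.isLt
          refine ⟨⟨k, hkm⟩, ?_, rfl⟩
          rw [hFdef, Finset.mem_filter]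
          refine ⟨Finset.mem_univ _, hint j l r ⟨k, hkm⟩ ?_ ?_ hl hr⟩
          · exact h1
          · show k ≤ r.val; omega
      have hresum : ∑ i ∈ F, (d (i.val + 1) - d i.val)
          = ∑ k ∈ Finset.Ico l.val (r.val + 1), (d (k + 1) - d k) := by
        rw [← hFimg]
        rw [Finset.sum_image (fun a _ b _ h => Fin.val_injective h)]
      rw [hresum]
      have htel : ∑ k ∈ Finset.Ico l.val (r.val + 1), (d (k + 1) - d k)
          = d (r.val + 1) - d l.val := by
        rw [Finset.sum_Ico_eq_sub _ (by omega : l.val ≤ r.val + 1)]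
        rw [Finset.sum_range_sub (f := d), Finset.sum_range_sub (f := d)]
        ring
      rw [htel]
      have := hkey j l r hl hr
      linarith
    · rw [Finset.not_nonempty_iff_eq_empty] at hF
      rw [hF, Finset.sum_empty]
      exact (hT j).le
  -- main lower bound for fractional feasible y
  have hmain : ∀ y : Fin n → ℚ, (∀ j, 0 ≤ y j) → (∀ i, 1 ≤ A.mulVec y i) →
      d m ≤ ∑ j, T j * y j := by
    intro y hy hAy
    have hc_nonneg : ∀ k, 0 ≤ d (k + 1) - d k :=
      fun k => sub_nonneg.2 (hmono k (k + 1) (Nat.le_succ k))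
    have h1 : d m = ∑ i : Fin m, (d (i.val + 1) - d i.val) := by
      rw [Fin.sum_univ_eq_sum_range (fun k => d (k + 1) - d k) m]
      rw [Finset.sum_range_sub (f := d), hd0, sub_zero]
    calc d m = ∑ i : Fin m, (d (i.val + 1) - d i.val) := h1
      _ ≤ ∑ i : Fin m, (d (i.val + 1) - d i.val) * (A.mulVec y i) := by
          apply Finset.sum_le_sum
          intro i _
          exact le_mul_of_one_le_right (hc_nonneg i.val) (hAy i)
      _ = ∑ i : Fin m, ∑ j : Fin n, (d (i.val + 1) - d i.val) * (A i j * y j) := by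
          apply Finset.sum_congr rfl
          intro i _
          rw [Matrix.mulVec, dotProduct, Finset.mul_sum]
      _ = ∑ j : Fin n, ∑ i : Fin m, (d (i.val + 1) - d i.val) * (A i j * y j) :=
          Finset.sum_comm
      _ = ∑ j : Fin n, (∑ i : Fin m, (d (i.val + 1) - d i.val) * A i j) * y j := by
          apply Finset.sum_congr rfl
          intro j _
          rw [Finset.sum_mul]
          apply Finset.sum_congr rfl
          intro i _
          ring
      _ ≤ ∑ j, T j * y j := by
          apply Finset.sum_le_sum
          intro j _
          exact mul_le_mul_of_nonneg_right (hcol j) (hy j)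
  -- construct the integer optimum
  obtain ⟨S, hS, hSeq⟩ := hd_mem m
  rw [hcand_mem] at hS
  refine ⟨fun j => if j ∈ S then 1 else 0, ?_, ?_, ?_⟩
  · intro j
    dsimp only
    split <;> norm_num
  · intro i
    obtain ⟨j0, hj0S, hj0⟩ := hS i i.isLt
    have hmv : A.mulVec (fun j => (((if j ∈ S then (1 : ℤ) else 0) : ℤ) : ℚ)) i
        = ∑ j : Fin n, A i j * (if j ∈ S then (1 : ℚ) else 0) := by
      simp [Matrix.mulVec, dotProduct, apply_ite]
    rw [hmv]
    have hterm : (1 : ℚ) = A i j0 * (if j0 ∈ S then (1 : ℚ) else 0) := by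
      simp [hj0, hj0S]
    have hsingle := Finset.single_le_sum
      (f := fun j => A i j * (if j ∈ S then (1 : ℚ) else 0))
      (fun j _ => by
        rcases hA01 i j with h | h <;> rw [h]
        · simp
        · rw [one_mul]; split <;> norm_num)
      (Finset.mem_univ j0)
    calc (1 : ℚ) = A i j0 * (if j0 ∈ S then (1 : ℚ) else 0) := hterm
      _ ≤ _ := hsingle
  · intro y hy hAy
    have hxcost : ∑ j, T j * (((if j ∈ S then (1 : ℤ) else 0) : ℤ) : ℚ) = cost S := by
      simp only [hcostdef, apply_ite, Int.cast_one, Int.cast_zero, mul_one, mul_zero]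
      rw [Finset.sum_ite_mem, Finset.univ_inter]
    rw [hxcost, ← hSeq]
    exact hmain y hy hAy
end
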